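/- Let K be an H-graded field and G a finite subgroup of the automorphism group of K (as graded ring). Then the graded subring L = K^G of G-invariants is a graded field, and K has finite degree over L equal to the order of G. -/

import Mathlib

open scoped DirectSum

/-- An `H`-graded field: a nonzero commutative ring with an internal grading by the
commutative group `H` in which every nonzero homogeneous element is invertible
(with homogeneous inverse). -/
structure GradedField (H : Type*) [CommGroup H] [DecidableEq H] (K : Type*) [CommRing K] where
  comp : H → AddSubgroup K
  one_mem : (1 : K) ∈ comp 1
  mul_mem : ∀ {g h : H} {x y : K}, x ∈ comp g → y ∈ comp h → x * y ∈ comp (g * h)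
  isInternal : DirectSum.IsInternal fun h : H => comp h
  zero_ne_one : (0 : K) ≠ 1
  inv_mem : ∀ {h : H} {x : K}, x ∈ comp h → x ≠ 0 → ∃ y ∈ comp h⁻¹, x * y = 1

namespace GradedField

variable {H : Type*} [CommGroup H] [DecidableEq H] {K : Type*} [CommRing K] (F : GradedField H K)

/-- A homogeneous element. -/
def Homogeneous (x : K) : Prop := ∃ h, x ∈ F.comp h

/-- A subring is graded if each of its elements is a sum of homogeneous elements of the
subring. -/
def IsGradedSubring (R : Subring K) : Prop :=
  ∀ x ∈ R, x ∈ AddSubgroup.closure {y : K | y ∈ R ∧ F.Homogeneous y}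

/-- A graded subfield: a graded subring closed under inverses of nonzero homogeneous
elements. -/
structure IsGradedSubfield (L : Subring K) : Prop where
  graded : F.IsGradedSubring L
  inv_mem : ∀ x ∈ L, F.Homogeneous x → x ≠ 0 → Ring.inverse x ∈ L

/-- A graded valuation ring of the graded subfield `L`: a graded subring `R ⊆ L` such that
every nonzero homogeneous element of `L` lies in `R` or has its inverse in `R`. -/
def IsGradedValRing (L R : Subring K) : Prop :=
  R ≤ L ∧ F.IsGradedSubring R ∧
    ∀ x ∈ L, F.Homogeneous x → x ≠ 0 → (x ∈ R ∨ Ring.inverse x ∈ R)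

/-- The identity component `K₁`, as a subring. -/
def oneComponent : Subring K where
  carrier := F.comp 1
  one_mem' := F.one_mem
  mul_mem' := fun ha hb => by simpa using F.mul_mem ha hb
  add_mem' := fun ha hb => (F.comp 1).add_mem ha hb
  zero_mem' := (F.comp 1).zero_mem
  neg_mem' := fun ha => (F.comp 1).neg_mem ha

theorem mem_oneComponent {x : K} : x ∈ F.oneComponent ↔ x ∈ F.comp 1 := Iff.rfl

/-- The value group `ρ(L^×) ⊆ H` of a graded subfield `L`. -/
def valueGroup (L : Subring K)
    (hL : ∀ x ∈ L, F.Homogeneous x → x ≠ 0 → Ring.inverse x ∈ L) : Subgroup H where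
  carrier := {h | ∃ x ∈ F.comp h, x ≠ 0 ∧ x ∈ L}
  one_mem' := ⟨1, F.one_mem, Ne.symm F.zero_ne_one, L.one_mem⟩
  mul_mem' := by
    rintro g h ⟨x, hx, hx0, hxL⟩ ⟨y, hy, hy0, hyL⟩
    obtain ⟨x', hx', hxx'⟩ := F.inv_mem hx hx0
    obtain ⟨y', hy', hyy'⟩ := F.inv_mem hy hy0
    refine ⟨x * y, F.mul_mem hx hy, ?_, L.mul_mem hxL hyL⟩
    intro h0
    have h1 : x * y * (x' * y') = 1 := by rw [mul_mul_mul_comm, hxx', hyy', one_mul]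
    rw [h0, zero_mul] at h1
    exact F.zero_ne_one h1
  inv_mem' := by
    rintro g ⟨x, hx, hx0, hxL⟩
    obtain ⟨y, hy, hxy⟩ := F.inv_mem hx hx0
    have hu : IsUnit x := IsUnit.of_mul_eq_one y hxy
    have hyx : Ring.inverse x = y := by
      calc Ring.inverse x = Ring.inverse x * (x * y) := by rw [hxy, mul_one]
        _ = Ring.inverse x * x * y := by ring
        _ = y := by rw [Ring.inverse_mul_cancel x hu, one_mul]
    refine ⟨y, hy, ?_, ?_⟩
    · intro h0; rw [h0, mul_zero] at hxy; exact F.zero_ne_one hxy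
    · rw [← hyx]; exact hL x hxL ⟨g, hx⟩ hx0

/-- The value group `ρ(K^×)` of the whole graded field. -/
def fullValueGroup : Subgroup H :=
  F.valueGroup ⊤ (fun _ _ _ _ => Subring.mem_top _)

/-- `K₁` as a module over `L₁ = K₁ ∩ L`. -/
def oneSubmodule (L : Subring K) : Submodule ↥(F.oneComponent ⊓ L) K where
  carrier := F.comp 1
  add_mem' := fun ha hb => (F.comp 1).add_mem ha hb
  zero_mem' := (F.comp 1).zero_mem
  smul_mem' := fun c x hx => by
    have hc : (c : K) ∈ F.comp 1 := ((Subring.mem_inf).mp c.2).1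
    have := F.mul_mem hc hx
    simpa [Subring.smul_def] using this

/-- A graded automorphism: a ring automorphism preserving each graded component. -/
def IsGradedAut (σ : RingAut K) : Prop := ∀ (h : H) (x : K), x ∈ F.comp h → σ x ∈ F.comp h

end GradedField

/-- The fixed subring `K^G` of a group of ring automorphisms. -/
def fixedSubring {K : Type*} [CommRing K] (G : Subgroup (RingAut K)) : Subring K where
  carrier := {x | ∀ σ ∈ G, σ x = x}
  one_mem' := fun σ _ => map_one σ
  mul_mem' := fun ha hb σ hσ => by rw [map_mul, ha σ hσ, hb σ hσ]
  add_mem' := fun ha hb σ hσ => by rw [map_add, ha σ hσ, hb σ hσ]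
  zero_mem' := fun σ _ => map_zero σ
  neg_mem' := fun ha σ hσ => by rw [map_neg, ha σ hσ]

theorem mem_fixedSubring {K : Type*} [CommRing K] {G : Subgroup (RingAut K)} {x : K} :
    x ∈ fixedSubring G ↔ ∀ σ ∈ G, σ x = x := Iff.rfl


namespace GradedField

variable {H : Type*} [CommGroup H] [DecidableEq H] {K : Type*} [CommRing K]
variable (F : GradedField H K)

/-- Decomposition of an element into its homogeneous components. -/
noncomputable def decompose (x : K) : ⨁ h : H, ↥(F.comp h) :=
  (Equiv.ofBijective _ F.isInternal).symm x

/-- The degree-`h` homogeneous component of `x`. -/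
noncomputable def component (h : H) (x : K) : K := (F.decompose x h : K)

/-- The inertia subgroup of `G`: graded automorphisms in `G` acting trivially on `K₁`. -/
def inertia (G : Subgroup (RingAut K)) : Subgroup (RingAut K) where
  carrier := {σ | σ ∈ G ∧ ∀ x ∈ F.comp 1, σ x = x}
  one_mem' := ⟨G.one_mem, fun _ _ => rfl⟩
  mul_mem' := fun {a b} ha hb => ⟨G.mul_mem ha.1 hb.1, fun x hx => by
    show a (b x) = x
    rw [hb.2 x hx, ha.2 x hx]⟩
  inv_mem' := fun {a} ha => ⟨G.inv_mem ha.1, fun x hx => by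
    conv_lhs => rw [← ha.2 x hx]
    exact a.symm_apply_apply x⟩

theorem mem_inertia {G : Subgroup (RingAut K)} {σ : RingAut K} :
    σ ∈ F.inertia G ↔ σ ∈ G ∧ ∀ x ∈ F.comp 1, σ x = x := Iff.rfl

end GradedField

/-- A subring `S` containing a subring `L`, viewed as an `L`-submodule of the ambient ring. -/
def Subring.toSubmoduleOver {K : Type*} [CommRing K] (L S : Subring K) (hLS : L ≤ S) :
    Submodule ↥L K where
  carrier := S
  add_mem' := fun ha hb => S.add_mem ha hb
  zero_mem' := S.zero_mem
  smul_mem' := fun c x hx => S.mul_mem (hLS c.2) hx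

section ZR

variable {H : Type*} [CommGroup H] [DecidableEq H] {K : Type*} [CommRing K]

/-- The Zariski–Riemann space of graded valuation rings of `K` containing `k₀`. -/
def GradedField.ZR (F : GradedField H K) (k₀ : Subring K) : Type _ :=
  {O : Subring K // F.IsGradedValRing ⊤ O ∧ k₀ ≤ O}

/-- The set of homogeneous units (nonzero homogeneous elements) of `K`. -/
def GradedField.HomogUnits (F : GradedField H K) : Type _ :=
  {x : K // x ≠ 0 ∧ F.Homogeneous x}

open Classical in
/-- The embedding of the Zariski–Riemann space into `{0,1}^{K^×}` via characteristic
functions. -/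
noncomputable def GradedField.chi (F : GradedField H K) (k₀ : Subring K) (O : F.ZR k₀) :
    F.HomogUnits → Bool :=
  fun x => decide (x.1 ∈ O.1)

/-- Basic open sets `P{F}∖{G}` of the constructible topology, for finite sets `F`, `G` of
homogeneous units. -/
def GradedField.constructibleBasis (F : GradedField H K) (k₀ : Subring K) :
    Set (Set (F.ZR k₀)) :=
  {s | ∃ Fs Gs : Finset K, (∀ a ∈ Fs, a ≠ 0 ∧ F.Homogeneous a) ∧
    (∀ b ∈ Gs, b ≠ 0 ∧ F.Homogeneous b) ∧
    s = {O : F.ZR k₀ | (∀ a ∈ Fs, a ∈ O.1) ∧ ∀ b ∈ Gs, b ∉ O.1}}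

/-- The constructible topology on the Zariski–Riemann space. -/
def GradedField.constructibleTop (F : GradedField H K) (k₀ : Subring K) :
    TopologicalSpace (F.ZR k₀) :=
  TopologicalSpace.generateFrom (F.constructibleBasis k₀)


/-!
Let `N ⊴ G` be the subgroup acting trivially on the field `K₁`, let `L₁ = K₁ ∩ L`, and let
`Γ_L ≤ Γ_K` be the degrees of the nonzero homogeneous elements of `L` and of `K`. Since `G/N` acts
faithfully on `K₁`, Artin's theorem gives `[K₁ : L₁] = |G/N|`. Each `σ ∈ N` scales all elements
of degree `γ` by one unit `⟨σ, γ⟩ ∈ K₁ˣ`; this pairing is bimultiplicative, nondegenerate on `N`,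
and its kernel in `Γ_K` is `Γ_L`: if `⟨N, γ⟩ = 1`, the relative trace `∑_{G/N} t(c u_γ)` is an
invariant element of degree `γ`, nonzero for a suitable `c ∈ K₁` by Dedekind's lemma. Counting
characters, again by Dedekind's lemma, gives `|Γ_K/Γ_L| = |N|`. Finally, for a basis `(b_i)` of
`K₁` over `L₁` and nonzero `u_t` with degrees representing `Γ_K/Γ_L`, the products `b_i u_t` form
a basis of `K` over `L`, so `[K : L] = |G/N| · |N| = |G|`.
-/

theorem smul_sum_quotient_out_smul {G M : Type*} [Group G] [AddCommMonoid M]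
    [DistribMulAction G M] {N : Subgroup G} [Fintype (G ⧸ N)] {x : M}
    (hx : ∀ n ∈ N, n • x = x) (g : G) :
    g • ∑ t : G ⧸ N, t.out • x = ∑ t : G ⧸ N, t.out • x := by
  have hcoset : ∀ t : G ⧸ N, (g * t.out) • x = (g • t).out • x := by
    intro t
    have hmem : (g • t).out⁻¹ * (g * t.out) ∈ N := by
      rw [← QuotientGroup.eq, QuotientGroup.out_eq']
      conv_lhs => rw [← QuotientGroup.out_eq' t]
      rfl
    conv_rhs => rw [← hx _ hmem, smul_smul, mul_inv_cancel_left]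
  simp only [Finset.smul_sum, smul_smul, hcoset]
  exact Fintype.sum_equiv (MulAction.toPerm g) _ _ fun _ => rfl

theorem inverse_mem_fixedSubring {K : Type*} [CommRing K] {G : Subgroup (RingAut K)} {x : K}
    (hx : x ∈ fixedSubring G) : Ring.inverse x ∈ fixedSubring G := by
  intro σ hσ
  by_cases hu : IsUnit x
  · have hσx : x * σ (Ring.inverse x) = 1 := by
      nth_rewrite 1 [← hx σ hσ]
      rw [← map_mul, Ring.mul_inverse_cancel x hu, map_one]
    rw [← Ring.inverse_mul_cancel_left x (σ (Ring.inverse x)) hu, hσx, mul_one]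
  · rw [Ring.inverse_non_unit x hu, map_zero]

theorem exists_sum_mul_apply_ne_zero {M k ι : Type*} [Monoid M] [CommRing k] [IsDomain k]
    [Fintype ι] {f : ι → M →* k} (hf : Function.Injective f) {a : ι → k} (ha : a ≠ 0) :
    ∃ m, ∑ i, a i * f i m ≠ 0 := by
  by_contra! h
  refine ha (funext <| Fintype.linearIndependent_iff.1
    ((linearIndependent_monoidHom M k).comp f hf) a (funext fun m => ?_))
  simpa using h m

theorem linearIndependent_monoidHom_units (M R : Type*) [Monoid M] [CommRing R] [IsDomain R] :
    LinearIndependent R fun (f : M →* Rˣ) (m : M) => (f m : R) :=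
  (linearIndependent_monoidHom M R).comp (fun f => (Units.coeHom R).comp f) fun _ _ h =>
    MonoidHom.ext fun m => Units.ext (DFunLike.congr_fun h m)

theorem finite_of_injective_monoidHom_units {M R ι : Type*} [Monoid M] [Finite M] [CommRing R]
    [IsDomain R] {f : ι → M →* Rˣ} (hf : Function.Injective f) : Finite ι :=
  ((linearIndependent_monoidHom_units M R).comp f hf).finite

theorem natCard_le_of_injective_monoidHom_units {M R ι : Type*} [Monoid M] [Finite M]
    [CommRing R] [IsDomain R] {f : ι → M →* Rˣ} (hf : Function.Injective f) :
    Nat.card ι ≤ Nat.card M := by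
  have hli := (linearIndependent_monoidHom_units M R).comp f hf
  have := hli.finite
  cases nonempty_fintype M
  cases nonempty_fintype ι
  simpa [Nat.card_eq_fintype_card, Module.finrank_fintype_fun_eq_card] using
    hli.fintype_card_le_finrank

namespace GradedField

open DirectSum

theorem nontrivial (F : GradedField H K) : Nontrivial K := ⟨⟨0, 1, F.zero_ne_one⟩⟩

section

variable (F : GradedField H K)

noncomputable scoped instance : Decomposition F.comp := F.isInternal.chooseDecomposition

theorem isUnit_of_mem {h : H} {x : K} (hx : x ∈ F.comp h) (h0 : x ≠ 0) : IsUnit x :=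
  let ⟨y, _, hxy⟩ := F.inv_mem hx h0
  IsUnit.of_mul_eq_one y hxy

theorem inverse_mem {h : H} {x : K} (hx : x ∈ F.comp h) : Ring.inverse x ∈ F.comp h⁻¹ := by
  rcases eq_or_ne x 0 with rfl | h0
  · rw [Ring.inverse_zero]
    exact zero_mem _
  obtain ⟨y, hy, hxy⟩ := F.inv_mem hx h0
  rwa [show Ring.inverse x = y by
    rw [← Ring.inverse_mul_cancel_left x y (F.isUnit_of_mem hx h0), hxy, mul_one]]

theorem exists_mem_one_eq_mul {γ : H} {x y : K} (hx : x ∈ F.comp γ) (hy : y ∈ F.comp γ)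
    (hy0 : y ≠ 0) : ∃ c ∈ F.comp 1, x = c * y :=
  ⟨x * Ring.inverse y, by simpa using F.mul_mem hx (F.inverse_mem hy),
    (Ring.inverse_mul_cancel_right y x (F.isUnit_of_mem hy hy0)).symm⟩

theorem coe_decompose_map {σ : RingAut K} (hσ : F.IsGradedAut σ) (x : K) (h : H) :
    (DirectSum.decompose F.comp (σ x) h : K) = σ (DirectSum.decompose F.comp x h) := by
  induction x using Decomposition.inductionOn F.comp with
  | zero => simp
  | @homogeneous i x =>
    have hσx : σ x ∈ F.comp i := hσ i x x.2
    rcases eq_or_ne i h with rfl | hne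
    · rw [decompose_of_mem_same _ hσx, decompose_of_mem_same _ x.2]
    · rw [decompose_of_mem_ne _ hσx hne, decompose_of_mem_ne _ x.2 hne, map_zero]
  | add x y hx hy =>
    simp only [map_add, decompose_add, DirectSum.add_apply, AddMemClass.coe_add, hx, hy]

theorem coe_decompose_mul_of_right_mem {g : H} {y : K} (hy : y ∈ F.comp g) (x : K) (a : H) :
    (DirectSum.decompose F.comp (x * y) a : K) = DirectSum.decompose F.comp x (a / g) * y := by
  induction x using Decomposition.inductionOn F.comp with
  | zero => simp
  | @homogeneous i x =>
    have hxy : (x : K) * y ∈ F.comp (i * g) := F.mul_mem x.2 hy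
    rcases eq_or_ne (i * g) a with rfl | hne
    · rw [decompose_of_mem_same _ hxy, mul_div_cancel_right, decompose_of_mem_same _ x.2]
    · rw [decompose_of_mem_ne _ hxy hne, decompose_of_mem_ne _ x.2 (by rintro rfl; simp at hne),
        zero_mul]
  | add x₁ x₂ hx₁ hx₂ =>
    simp only [add_mul, decompose_add, DirectSum.add_apply, AddMemClass.coe_add, hx₁, hx₂]

theorem eq_zero_of_forall_coe_decompose_eq_zero {x : K}
    (h : ∀ a : H, (DirectSum.decompose F.comp x a : K) = 0) : x = 0 := by
  classical
  rw [← sum_support_decompose F.comp x]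
  exact Finset.sum_eq_zero fun a _ => h a

theorem coe_decompose_mem_fixedSubring {G : Subgroup (RingAut K)}
    (hG : ∀ σ ∈ G, F.IsGradedAut σ) {x : K} (hx : x ∈ fixedSubring G) (h : H) :
    (DirectSum.decompose F.comp x h : K) ∈ fixedSubring G := fun σ hσ => by
  rw [← F.coe_decompose_map (hG σ hσ), hx σ hσ]

theorem isGradedSubfield_fixedSubring {G : Subgroup (RingAut K)}
    (hG : ∀ σ ∈ G, F.IsGradedAut σ) : F.IsGradedSubfield (fixedSubring G) where
  graded x hx := by
    classical
    rw [← sum_support_decompose F.comp x]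
    exact AddSubgroup.sum_mem _ fun h _ => AddSubgroup.subset_closure
      ⟨F.coe_decompose_mem_fixedSubring hG hx h, h, SetLike.coe_mem _⟩
  inv_mem _ hx _ _ := inverse_mem_fixedSubring hx

noncomputable scoped instance : Field F.oneComponent := by
  have := F.nontrivial
  refine IsField.toField ⟨⟨0, 1, fun h => F.zero_ne_one congr($h.1)⟩, mul_comm, fun {a} ha => ?_⟩
  obtain ⟨b, hb, hab⟩ := F.inv_mem (F.mem_oneComponent.1 a.2) fun h => ha (Subtype.ext h)
  exact ⟨⟨b, by simpa [mem_oneComponent] using hb⟩, Subtype.ext hab⟩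

theorem eq_one_of_forall_mem_comp {σ : RingAut K} (hσ : ∀ γ, ∀ x ∈ F.comp γ, σ x = x) :
    σ = 1 := by
  ext x
  induction x using Decomposition.inductionOn F.comp with
  | zero => exact map_zero σ
  | homogeneous x => exact hσ _ x x.2
  | add x y hx hy => rw [map_add, hx, hy]; rfl

def restrictOneComponent (G : Subgroup (RingAut K)) (hG : ∀ σ ∈ G, F.IsGradedAut σ) :
    G →* RingAut F.oneComponent where
  toFun σ := (σ : RingAut K).restrict F.oneComponent F.oneComponent fun x =>
    ⟨hG σ σ.2 1 x, fun h => by simpa [mem_oneComponent] using hG σ⁻¹ (G.inv_mem σ.2) 1 _ h⟩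
  map_one' := rfl
  map_mul' _ _ := rfl

theorem mem_valueGroup {L : Subring K} {hL : ∀ x ∈ L, F.Homogeneous x → x ≠ 0 →
    Ring.inverse x ∈ L} {h : H} : h ∈ F.valueGroup L hL ↔ ∃ x ∈ F.comp h, x ≠ 0 ∧ x ∈ L :=
  Iff.rfl

abbrev fixedValueGroup (G : Subgroup (RingAut K)) : Subgroup H :=
  F.valueGroup (fixedSubring G) fun _ hx _ _ => inverse_mem_fixedSubring hx

abbrev valueGroupQuotient (G : Subgroup (RingAut K)) : Type _ :=
  F.fullValueGroup ⧸ (F.fixedValueGroup G).subgroupOf F.fullValueGroup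

noncomputable def rep (γ : F.fullValueGroup) : K := (F.mem_valueGroup.1 γ.2).choose

theorem rep_mem (γ : F.fullValueGroup) : F.rep γ ∈ F.comp γ :=
  (F.mem_valueGroup.1 γ.2).choose_spec.1

theorem rep_ne_zero (γ : F.fullValueGroup) : F.rep γ ≠ 0 :=
  (F.mem_valueGroup.1 γ.2).choose_spec.2.1

theorem isUnit_rep (γ : F.fullValueGroup) : IsUnit (F.rep γ) :=
  F.isUnit_of_mem (F.rep_mem γ) (F.rep_ne_zero γ)

noncomputable def ratio (σ : RingAut K) (γ : F.fullValueGroup) : K :=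
  σ (F.rep γ) * Ring.inverse (F.rep γ)

theorem map_rep (σ : RingAut K) (γ : F.fullValueGroup) :
    σ (F.rep γ) = F.ratio σ γ * F.rep γ :=
  (Ring.inverse_mul_cancel_right _ _ (F.isUnit_rep γ)).symm

theorem ratio_mem_one {σ : RingAut K} (hσ : F.IsGradedAut σ) (γ : F.fullValueGroup) :
    F.ratio σ γ ∈ F.comp 1 := by
  simpa [ratio] using F.mul_mem (hσ γ _ (F.rep_mem γ)) (F.inverse_mem (F.rep_mem γ))

theorem ratio_ne_zero (σ : RingAut K) (γ : F.fullValueGroup) : F.ratio σ γ ≠ 0 := by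
  intro h
  apply F.rep_ne_zero γ
  rw [← map_eq_zero_iff σ σ.injective, F.map_rep, h, zero_mul]

variable {G : Subgroup (RingAut K)} {hG : ∀ σ ∈ G, F.IsGradedAut σ}

theorem mem_ker_restrictOneComponent {σ : G} :
    σ ∈ (F.restrictOneComponent G hG).ker ↔ ∀ x ∈ F.comp 1, (σ : RingAut K) x = x := by
  simp only [MonoidHom.mem_ker, RingEquiv.ext_iff, Subtype.ext_iff]
  exact ⟨fun h x hx => h ⟨x, hx⟩, fun h x => h x x.2⟩

theorem mem_fixedPoints_range_restrictOneComponent_iff {c : F.oneComponent} :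
    c ∈ FixedPoints.subfield (F.restrictOneComponent G hG).range F.oneComponent ↔
      (c : K) ∈ fixedSubring G := by
  refine ⟨fun hc σ hσ => congr($(hc ⟨_, ⟨σ, hσ⟩, rfl⟩).1), ?_⟩
  rintro hc ⟨_, ⟨σ, rfl⟩⟩
  exact Subtype.ext (hc σ σ.2)

end

section

variable {F : GradedField H K}

theorem map_eq_ratio_mul {σ : RingAut K} (hσ : ∀ c ∈ F.comp 1, σ c = c)
    {γ : F.fullValueGroup} {x : K} (hx : x ∈ F.comp γ) : σ x = F.ratio σ γ * x := by
  rcases eq_or_ne x 0 with rfl | hx0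
  · rw [map_zero, mul_zero]
  obtain ⟨c, hc, rfl⟩ := F.exists_mem_one_eq_mul hx (F.rep_mem γ) (F.rep_ne_zero γ)
  rw [map_mul, hσ c hc, F.map_rep]
  ring

theorem ratio_eq_of_map_eq_mul {σ : RingAut K} (hσ : ∀ c ∈ F.comp 1, σ c = c)
    {γ : F.fullValueGroup} {x a : K} (hx : x ∈ F.comp γ) (hx0 : x ≠ 0) (h : σ x = a * x) :
    F.ratio σ γ = a :=
  (F.isUnit_of_mem hx hx0).mul_left_inj.1 ((map_eq_ratio_mul hσ hx).symm.trans h)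

theorem ratio_mul_right {σ : RingAut K} (hσ : ∀ c ∈ F.comp 1, σ c = c)
    (γ δ : F.fullValueGroup) : F.ratio σ (γ * δ) = F.ratio σ γ * F.ratio σ δ := by
  have hmem : F.rep γ * F.rep δ ∈ F.comp (γ * δ : F.fullValueGroup) :=
    F.mul_mem (F.rep_mem γ) (F.rep_mem δ)
  have := F.nontrivial
  refine ratio_eq_of_map_eq_mul hσ hmem ((F.isUnit_rep γ).mul (F.isUnit_rep δ)).ne_zero ?_
  rw [map_mul, F.map_rep, F.map_rep]
  ring

theorem ratio_mul_left {σ τ : RingAut K} (hσ : ∀ c ∈ F.comp 1, σ c = c)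
    (hτ : F.IsGradedAut τ) (γ : F.fullValueGroup) :
    F.ratio (σ * τ) γ = F.ratio σ γ * F.ratio τ γ := by
  rw [ratio, RingAut.mul_apply, F.map_rep τ, map_mul, hσ _ (F.ratio_mem_one hτ γ), F.map_rep,
    ← mul_assoc, Ring.mul_inverse_cancel_right _ _ (F.isUnit_rep γ), mul_comm]

end

section

variable {F : GradedField H K} {G : Subgroup (RingAut K)} (hG : ∀ σ ∈ G, F.IsGradedAut σ)

/-- Since `N` fixes `K₁`, the ratio `σ(x)/x` is the same for all nonzero `x` of degree `γ`;
this makes it multiplicative in `γ`. -/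
noncomputable def pairing :
    (F.restrictOneComponent G hG).ker →* F.fullValueGroup →* F.oneComponentˣ :=
  MonoidHom.mk'
    (fun σ => MonoidHom.mk'
      (fun γ => Units.mk0 ⟨F.ratio (σ : G) γ, F.ratio_mem_one (hG _ (σ : G).2) γ⟩
        fun h => F.ratio_ne_zero _ γ congr($h.1))
      fun γ δ => Units.ext <| Subtype.ext <|
        ratio_mul_right (F.mem_ker_restrictOneComponent.1 σ.2) γ δ)
    fun σ τ => MonoidHom.ext fun γ => Units.ext <| Subtype.ext <|
      ratio_mul_left (F.mem_ker_restrictOneComponent.1 σ.2) (hG _ (τ : G).2) γ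

theorem pairing_injective : Function.Injective (F.pairing hG) := by
  refine (injective_iff_map_eq_one _).2 fun σ hσ => ?_
  have hratio : ∀ γ, F.ratio (σ : G) γ = 1 := fun γ =>
    congr((($(DFunLike.congr_fun hσ γ) : F.oneComponentˣ) : F.oneComponent))
  have hone : ((σ : G) : RingAut K) = 1 := F.eq_one_of_forall_mem_comp fun h x hx => by
    rcases eq_or_ne x 0 with rfl | hx0
    · exact map_zero _
    rw [map_eq_ratio_mul (γ := ⟨h, x, hx, hx0, Subring.mem_top x⟩)
      (F.mem_ker_restrictOneComponent.1 σ.2) hx, hratio, one_mul]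
  exact Subtype.ext (Subtype.ext hone)

/-- The relative trace `c ↦ ∑_{t ∈ G/N} t(c u_γ)` maps `K₁` into `L ∩ K_γ`, and by Dedekind's
lemma on `K₁` it is not identically zero. -/
theorem mem_fixedValueGroup_of_forall_ratio_eq_one [Finite G] {γ : F.fullValueGroup}
    (hγ : ∀ σ ∈ (F.restrictOneComponent G hG).ker, F.ratio σ γ = 1) :
    (γ : H) ∈ F.fixedValueGroup G := by
  set ρ := F.restrictOneComponent G hG
  let _ : Fintype (G ⧸ ρ.ker) := Fintype.ofFinite _
  by_contra hγL
  have htrace : ∀ c ∈ F.comp 1, ∑ t : G ⧸ ρ.ker, t.out • (c * F.rep γ) = 0 := by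
    intro c hc
    have hfixed : ∀ ν ∈ ρ.ker, ν • (c * F.rep γ) = c * F.rep γ := fun ν hν => by
      change (ν : RingAut K) (c * F.rep γ) = _
      rw [map_mul, F.mem_ker_restrictOneComponent.1 hν c hc, F.map_rep, hγ ν hν, one_mul]
    have hdeg : c * F.rep γ ∈ F.comp γ := by simpa using F.mul_mem hc (F.rep_mem γ)
    by_contra hne
    exact hγL ⟨_, sum_mem fun t _ => hG _ t.out.2 _ _ hdeg, hne,
      fun σ hσ => smul_sum_quotient_out_smul hfixed ⟨σ, hσ⟩⟩
  have hout : ∀ t : G ⧸ ρ.ker, QuotientGroup.kerLift ρ t = ρ t.out := fun t => by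
    conv_lhs => rw [← QuotientGroup.out_eq' t]
    rfl
  obtain ⟨c, hc⟩ := exists_sum_mul_apply_ne_zero
    (f := fun t => ((QuotientGroup.kerLift ρ t : RingAut F.oneComponent) :
      F.oneComponent →* F.oneComponent))
    (fun _ _ h => QuotientGroup.kerLift_injective ρ (RingEquiv.ext fun x => DFunLike.congr_fun h x))
    (a := fun t => ⟨F.ratio (t.out : G) γ, F.ratio_mem_one (hG _ t.out.2) γ⟩)
    (Function.ne_iff.2 ⟨1, fun h => F.ratio_ne_zero _ γ congr($h.1)⟩)
  refine hc (Subtype.ext ((F.isUnit_rep γ).mul_left_inj.1 ?_))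
  rw [ZeroMemClass.coe_zero, zero_mul, ← htrace c c.2, AddSubmonoidClass.coe_finsetSum,
    Finset.sum_mul]
  refine Finset.sum_congr rfl fun t _ => ?_
  change F.ratio (t.out : G) γ * (QuotientGroup.kerLift ρ t c : K) * F.rep γ =
    (t.out : RingAut K) (c * F.rep γ)
  rw [hout, map_mul, F.map_rep]
  change _ * (t.out : RingAut K) c * _ = _
  ring

theorem ker_pairing_flip [Finite G] :
    (F.pairing hG).flip.ker = (F.fixedValueGroup G).subgroupOf F.fullValueGroup := by
  ext γ
  rw [MonoidHom.mem_ker, Subgroup.mem_subgroupOf]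
  refine ⟨fun h => mem_fixedValueGroup_of_forall_ratio_eq_one hG fun σ hσ =>
    congr((($(DFunLike.congr_fun h (⟨σ, hσ⟩ : (F.restrictOneComponent G hG).ker)) :
      F.oneComponentˣ) : F.oneComponent)), ?_⟩
  rintro ⟨w, hw, hw0, hwL⟩
  refine MonoidHom.ext fun σ => Units.ext (Subtype.ext ?_)
  exact ratio_eq_of_map_eq_mul (a := 1) (F.mem_ker_restrictOneComponent.1 σ.2) hw hw0
    (by rw [one_mul]; exact hwL _ (σ : G).2)

theorem injective_lift_pairing_flip [Finite G] :
    Function.Injective (QuotientGroup.lift _ (F.pairing hG).flip (ker_pairing_flip hG).ge) :=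
  (QuotientGroup.injective_lift_iff _ _ _).2 (ker_pairing_flip hG).symm

theorem finite_valueGroupQuotient [Finite G] (hG : ∀ σ ∈ G, F.IsGradedAut σ) :
    Finite (F.valueGroupQuotient G) :=
  finite_of_injective_monoidHom_units (injective_lift_pairing_flip hG)

theorem card_valueGroupQuotient [Finite G] :
    Nat.card (F.valueGroupQuotient G) = Nat.card (F.restrictOneComponent G hG).ker := by
  have := finite_valueGroupQuotient hG
  refine le_antisymm (natCard_le_of_injective_monoidHom_units (injective_lift_pairing_flip hG))
    (natCard_le_of_injective_monoidHom_units (f := fun σ => QuotientGroup.lift _ (F.pairing hG σ)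
      fun γ hγ => MonoidHom.mem_ker.2 <|
        DFunLike.congr_fun (MonoidHom.mem_ker.1 ((ker_pairing_flip hG).ge hγ)) σ) ?_)
  exact fun σ τ h => pairing_injective hG (MonoidHom.ext fun γ =>
    DFunLike.congr_fun h (γ : F.valueGroupQuotient G))

theorem eq_of_div_out_mem_fixedValueGroup {a : H} {s t : F.valueGroupQuotient G}
    (hs : a / (s.out : H) ∈ F.fixedValueGroup G) (ht : a / (t.out : H) ∈ F.fixedValueGroup G) :
    s = t := by
  rw [← QuotientGroup.out_eq' s, ← QuotientGroup.out_eq' t, QuotientGroup.eq_iff_div_mem,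
    Subgroup.mem_subgroupOf, Subgroup.coe_div]
  simpa only [div_div_div_cancel_left] using div_mem ht hs

theorem linearIndependent_of_homogeneous {ι : Type*} [Fintype ι] {L : Subring K}
    (hL : ∀ x ∈ L, ∀ h, (DirectSum.decompose F.comp x h : K) ∈ L) {v : ι → K} {d : ι → H}
    (hv : ∀ i, v i ∈ F.comp (d i))
    (hrel : ∀ (a : H) (c : ι → K), (∀ i, c i ∈ L ∧ c i ∈ F.comp (a / d i)) →
      ∑ i, c i * v i = 0 → ∀ i, c i = 0) :
    LinearIndependent L v := by
  refine Fintype.linearIndependent_iff.2 fun g hg i =>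
    Subtype.ext (F.eq_zero_of_forall_coe_decompose_eq_zero fun e => ?_)
  have hcomp : ∑ j, (DirectSum.decompose F.comp (g j : K) (e * d i / d j) : K) * v j = 0 := by
    have h0 := congr((DirectSum.decompose F.comp $hg (e * d i) : K))
    rw [decompose_sum, DFinsupp.finsetSum_apply, AddSubmonoidClass.coe_finsetSum] at h0
    simpa only [Subring.smul_def, smul_eq_mul, F.coe_decompose_mul_of_right_mem (hv _),
      decompose_zero, DirectSum.zero_apply, ZeroMemClass.coe_zero] using h0
  have := hrel (e * d i) _ (fun j => ⟨hL _ (g j).2 _, SetLike.coe_mem _⟩) hcomp i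
  rwa [mul_div_cancel_right] at this

instance [Finite G] : Finite (F.restrictOneComponent G hG).range :=
  Finite.of_surjective _ (F.restrictOneComponent G hG).rangeRestrict_surjective

noncomputable abbrev fixedOneComponent : Subfield F.oneComponent :=
  FixedPoints.subfield (F.restrictOneComponent G hG).range F.oneComponent

theorem finrank_fixedOneComponent [Finite G] :
    Module.finrank (fixedOneComponent hG) F.oneComponent =
      Nat.card (F.restrictOneComponent G hG).range := by
  have := Fintype.ofFinite (F.restrictOneComponent G hG).range
  rw [FixedPoints.finrank_eq_card, Nat.card_eq_fintype_card]

noncomputable def basisFamily [Finite G] :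
    Fin (Module.finrank (fixedOneComponent hG) F.oneComponent) × F.valueGroupQuotient G → K :=
  fun p => (Module.finBasis (fixedOneComponent hG) F.oneComponent p.1 : K) * F.rep p.2.out

theorem eq_zero_of_sum_mul_basis_eq_zero {ι : Type*} [Fintype ι]
    (b : Module.Basis ι (fixedOneComponent hG) F.oneComponent) {c : ι → K}
    (hc : ∀ i, c i ∈ F.comp 1 ∧ c i ∈ fixedSubring G) (h : ∑ i, c i * b i = 0) (i : ι) :
    c i = 0 := by
  have := Fintype.linearIndependent_iff.1 b.linearIndependent
    (fun i => ⟨⟨c i, (hc i).1⟩, F.mem_fixedPoints_range_restrictOneComponent_iff.2 (hc i).2⟩)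
    (Subtype.ext (by simpa [Subfield.smul_def] using h)) i
  exact congr((($this : F.oneComponent) : K))

theorem mem_span_basisFamily [Finite G] {h : H} {y : K} (hy : y ∈ F.comp h) :
    y ∈ Submodule.span (fixedSubring G) (Set.range (basisFamily hG)) := by
  rcases eq_or_ne y 0 with rfl | hy0
  · exact zero_mem _
  set t : F.valueGroupQuotient G :=
    QuotientGroup.mk (⟨h, y, hy, hy0, Subring.mem_top y⟩ : F.fullValueGroup)
  obtain ⟨w, hw, hw0, hwL⟩ : (t.out : H)⁻¹ * h ∈ F.fixedValueGroup G :=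
    Subgroup.mem_subgroupOf.1 (QuotientGroup.eq.1 (QuotientGroup.out_eq' t))
  have hmem : F.rep t.out * w ∈ F.comp h := by simpa using F.mul_mem (F.rep_mem t.out) hw
  have := F.nontrivial
  obtain ⟨c, hc, hyc⟩ := F.exists_mem_one_eq_mul hy hmem
    ((F.isUnit_rep _).mul (F.isUnit_of_mem hw hw0)).ne_zero
  set b := Module.finBasis (fixedOneComponent hG) F.oneComponent
  have hc_sum : c = ∑ i, ((b.repr ⟨c, hc⟩ i : F.oneComponent) : K) * b i := by
    conv_lhs => rw [show c = ((⟨c, hc⟩ : F.oneComponent) : K) from rfl, ← b.sum_repr ⟨c, hc⟩]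
    simp [Subfield.smul_def]
  rw [hyc, hc_sum, Finset.sum_mul]
  refine Submodule.sum_mem _ fun i _ => ?_
  have hcoeff : ((b.repr ⟨c, hc⟩ i : F.oneComponent) : K) * w ∈ fixedSubring G :=
    (fixedSubring G).mul_mem
      (F.mem_fixedPoints_range_restrictOneComponent_iff.1 (b.repr ⟨c, hc⟩ i).2) hwL
  convert Submodule.smul_mem _ (⟨_, hcoeff⟩ : fixedSubring G)
    (Submodule.subset_span (Set.mem_range_self (f := basisFamily hG) (i, t))) using 1
  simp only [basisFamily, Subring.smul_def, smul_eq_mul]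
  ring

theorem span_basisFamily [Finite G] :
    ⊤ ≤ Submodule.span (fixedSubring G) (Set.range (basisFamily hG)) := by
  classical
  intro x _
  rw [← sum_support_decompose F.comp x]
  exact Submodule.sum_mem _ fun h _ => mem_span_basisFamily hG (SetLike.coe_mem _)

theorem linearIndependent_basisFamily [Finite G] :
    LinearIndependent (fixedSubring G) (basisFamily hG) := by
  have := finite_valueGroupQuotient hG
  have := Fintype.ofFinite (F.valueGroupQuotient G)
  set b := Module.finBasis (fixedOneComponent hG) F.oneComponent
  refine linearIndependent_of_homogeneous (fun _ hx => F.coe_decompose_mem_fixedSubring hG hx)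
    (d := fun p => (p.2.out : H))
    (fun p => by simpa [basisFamily] using F.mul_mem (b p.1).2 (F.rep_mem p.2.out))
    fun a c hc hsum => ?_
  by_contra! hne
  obtain ⟨⟨i₀, t₀⟩, hne⟩ := hne
  have hvanish : ∀ p : _ × _, p.2 ≠ t₀ → c p = 0 := fun p hp => by
    by_contra h
    exact hp (eq_of_div_out_mem_fixedValueGroup ⟨c p, (hc p).2, h, (hc p).1⟩
      ⟨_, (hc (i₀, t₀)).2, hne, (hc (i₀, t₀)).1⟩)
  have hsum₀ : ∑ i, c (i, t₀) * b i = 0 := by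
    rw [Fintype.sum_prod_type_right, Finset.sum_eq_single t₀ (fun t _ ht => Finset.sum_eq_zero
      fun i _ => by rw [hvanish (i, t) ht, zero_mul]) (by simp)] at hsum
    apply (F.isUnit_rep t₀.out).mul_left_inj.1
    rw [Finset.sum_mul, zero_mul, ← hsum]
    simp only [basisFamily, mul_assoc]
    rfl
  set w := c (i₀, t₀)
  have hw : w * Ring.inverse w = 0 := eq_zero_of_sum_mul_basis_eq_zero hG b
    (c := fun i => c (i, t₀) * Ring.inverse w)
    (fun i => ⟨by simpa using F.mul_mem (hc (i, t₀)).2 (F.inverse_mem (hc (i₀, t₀)).2),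
      (fixedSubring G).mul_mem (hc _).1 (inverse_mem_fixedSubring (hc _).1)⟩)
    (by simp only [mul_right_comm _ (Ring.inverse w), ← Finset.sum_mul, hsum₀, zero_mul]) i₀
  rw [Ring.mul_inverse_cancel w (F.isUnit_of_mem (hc _).2 hne)] at hw
  exact F.zero_ne_one hw.symm

end

theorem rank_fixedSubring (F : GradedField H K) {G : Subgroup (RingAut K)} [Finite G]
    (hG : ∀ σ ∈ G, F.IsGradedAut σ) :
    Module.rank (fixedSubring G) K = Nat.card G := by
  have := F.nontrivial
  have := finite_valueGroupQuotient hG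
  have := Fintype.ofFinite (F.valueGroupQuotient G)
  let B := Module.Basis.mk (linearIndependent_basisFamily hG) (span_basisFamily hG)
  have := Module.Finite.of_basis B
  rw [← Module.finrank_eq_rank, Module.finrank_eq_card_basis B, Fintype.card_prod,
    Fintype.card_fin, ← Nat.card_eq_fintype_card, finrank_fixedOneComponent,
    card_valueGroupQuotient hG, ← Subgroup.index_ker, mul_comm, Subgroup.card_mul_index]

end GradedField

/-- Artin's lemma for graded fields: if `G` is a finite group of graded automorphisms of an
`H`-graded field `K`, then the invariant subring `L = K^G` is a graded subfield of `K` and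
`[K:L] = #G`. -/
theorem GradedField.isGradedSubfield_fixed_and_rank_eq_card {H : Type*} [CommGroup H]
    [DecidableEq H] {K : Type*} [CommRing K] (F : GradedField H K)
    (G : Subgroup (RingAut K)) [Finite G] (hG : ∀ σ ∈ G, F.IsGradedAut σ) :
    F.IsGradedSubfield (fixedSubring G) ∧
      Module.rank ↥(fixedSubring G) K = Nat.card G :=
  ⟨F.isGradedSubfield_fixedSubring hG, F.rank_fixedSubring hG⟩
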